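/- arXiv:2301.11867 — 7 statements merged into one kernel-verified Lean document; each statement's English description precedes it below -/
import Mathlib

section
/- Monoidal lenses over a symmetric monoidal category form a category. Precisely: let (C, ⊗, I, σ) be a symmetric monoidal category. There is a category whose objects are pairs (A,B) of objects of C and whose hom-set from (A,B) to (X,Y) is LC((A,B);(X,Y)); the identity of (A,B) is the class of (I, λ_A⁻¹ : A ⟶ I ⊗ A, λ_B : I ⊗ B ⟶ B); the composite of the class of (M, f, g) : (A,B) → (X,Y) with the class of (M', h, k) : (X,Y) → (X',Y') is the class of (M ⊗ M', f ≫ (id_M ⊗ h) followed by the coherence isomorphism M ⊗ (M' ⊗ X') ≅ (M ⊗ M') ⊗ X', the coherence isomorphism (M ⊗ M') ⊗ Y' ≅ M ⊗ (M' ⊗ Y') followed by (id_M ⊗ k) ≫ g). This composition is well defined on dinaturality classes, associative, and unital. -/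
/-!
Monoidal lenses over a symmetric monoidal category form a category.
-/

open CategoryTheory MonoidalCategory

universe v u

variable {C : Type u} [Category.{v} C] [MonoidalCategory C] [SymmetricCategory C]

/-- A representative of a monoidal lens from `(A,B)` to `(X,Y)`:
a residual `M`, a forward part `f : A ⟶ M ⊗ X` and a backward part `g : M ⊗ Y ⟶ B`. -/
structure LensRep (A B X Y : C) where
  M : C
  f : A ⟶ M ⊗ X
  g : M ⊗ Y ⟶ B

/-- Dinaturality in the residual of a lens representative. -/
inductive LensRel (A B X Y : C) : LensRep A B X Y → LensRep A B X Y → Prop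
  | dinat {M M' : C} (m : M ⟶ M') (f : A ⟶ M ⊗ X) (g' : M' ⊗ Y ⟶ B) :
      LensRel A B X Y ⟨M', f ≫ (m ⊗ₘ 𝟙 X), g'⟩ ⟨M, f, (m ⊗ₘ 𝟙 Y) ≫ g'⟩

/-- Monoidal lenses: representatives modulo the equivalence relation generated
by dinaturality in the residual. -/
abbrev LC (A B X Y : C) : Type max u v := Quot (LensRel A B X Y)

/-- The identity lens on `(A,B)`. -/
def lensId (A B : C) : LC A B A B :=
  Quot.mk _ ⟨𝟙_ C, (λ_ A).inv, (λ_ B).hom⟩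


omit [SymmetricCategory C] in
lemma dinat_mk {A B X Y : C} {M M' : C} (m : M ⟶ M')
    {f1 : A ⟶ M' ⊗ X} {g1 : M' ⊗ Y ⟶ B} {f2 : A ⟶ M ⊗ X} {g2 : M ⊗ Y ⟶ B}
    (hf : f1 = f2 ≫ (m ⊗ₘ 𝟙 X)) (hg : g2 = (m ⊗ₘ 𝟙 Y) ≫ g1) :
    Quot.mk (LensRel A B X Y) ⟨M', f1, g1⟩ = Quot.mk _ ⟨M, f2, g2⟩ := by
  subst hf hg; exact Quot.sound (LensRel.dinat m f2 g1)

def compRep {A B X Y X' Y' : C} (r : LensRep A B X Y) (s : LensRep X Y X' Y') :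
    LensRep A B X' Y' :=
  ⟨r.M ⊗ s.M, r.f ≫ (𝟙 r.M ⊗ₘ s.f) ≫ (α_ r.M s.M X').inv,
    (α_ r.M s.M Y').hom ≫ (𝟙 r.M ⊗ₘ s.g) ≫ r.g⟩

omit [SymmetricCategory C] in
lemma compRep_left {A B X Y X' Y' : C} (r r' : LensRep A B X Y)
    (h : LensRel A B X Y r r') (s : LensRep X Y X' Y') :
    Quot.mk (LensRel A B X' Y') (compRep r s) = Quot.mk _ (compRep r' s) := by
  cases h with
  | dinat m f g' =>
    apply dinat_mk (m ⊗ₘ 𝟙 s.M)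
    · simp only [compRep, id_tensorHom, tensorHom_id, comp_whiskerRight, Category.assoc]
      rw [← associator_inv_naturality_left, whisker_exchange_assoc]
    · simp only [compRep, id_tensorHom, tensorHom_id, comp_whiskerRight, Category.assoc]
      rw [associator_naturality_left_assoc, ← whisker_exchange_assoc]

omit [SymmetricCategory C] in
lemma compRep_right {A B X Y X' Y' : C} (r : LensRep A B X Y)
    (s s' : LensRep X Y X' Y') (h : LensRel X Y X' Y' s s') :
    Quot.mk (LensRel A B X' Y') (compRep r s) = Quot.mk _ (compRep r s') := by
  cases h with
  | dinat n f g' =>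
    apply dinat_mk (𝟙 r.M ⊗ₘ n)
    · simp only [compRep, id_tensorHom, tensorHom_id, MonoidalCategory.whiskerLeft_comp,
        Category.assoc]
      rw [← associator_inv_naturality_middle]
    · simp only [compRep, id_tensorHom, tensorHom_id, MonoidalCategory.whiskerLeft_comp,
        Category.assoc, associator_naturality_middle_assoc]

def lensComp {A B X Y X' Y' : C} : LC A B X Y → LC X Y X' Y' → LC A B X' Y' :=
  Quot.lift₂ (fun r s => Quot.mk _ (compRep r s))
    (fun r s s' h => compRep_right r s s' h)
    (fun r r' s h => compRep_left r r' h s)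

/-- Monoidal lenses over a symmetric monoidal category form a category:
there is a composition operation on dinaturality classes which, on representatives,
is given by substitution (tensoring the residuals), and which is unital for the
identity lenses and associative. -/
theorem lenses_form_a_category (C : Type u) [Category.{v} C] [MonoidalCategory C]
    [SymmetricCategory C] :
    ∃ comp : ∀ (A B X Y X' Y' : C), LC A B X Y → LC X Y X' Y' → LC A B X' Y',
      (∀ (A B X Y X' Y' : C) (r : LensRep A B X Y) (s : LensRep X Y X' Y'),
          comp A B X Y X' Y' (Quot.mk _ r) (Quot.mk _ s) =
            Quot.mk _ ⟨r.M ⊗ s.M,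
              r.f ≫ (𝟙 r.M ⊗ₘ s.f) ≫ (α_ r.M s.M X').inv,
              (α_ r.M s.M Y').hom ≫ (𝟙 r.M ⊗ₘ s.g) ≫ r.g⟩) ∧
      (∀ (A B X Y : C) (l : LC A B X Y), comp A B A B X Y (lensId A B) l = l) ∧
      (∀ (A B X Y : C) (l : LC A B X Y), comp A B X Y X Y l (lensId X Y) = l) ∧
      (∀ (A B X Y X' Y' X'' Y'' : C)
          (l₁ : LC A B X Y) (l₂ : LC X Y X' Y') (l₃ : LC X' Y' X'' Y''),
          comp A B X' Y' X'' Y'' (comp A B X Y X' Y' l₁ l₂) l₃ =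
          comp A B X Y X'' Y'' l₁ (comp X Y X' Y' X'' Y'' l₂ l₃)) := by
  refine ⟨fun A B X Y X' Y' => lensComp, fun _ _ _ _ _ _ _ _ => rfl, ?_, ?_, ?_⟩
  · intro A B X Y l
    induction l using Quot.ind with | mk r =>
    obtain ⟨M, f, g⟩ := r
    show Quot.mk _ (compRep ⟨𝟙_ C, (λ_ A).inv, (λ_ B).hom⟩ ⟨M, f, g⟩) = Quot.mk _ ⟨M, f, g⟩
    apply dinat_mk (λ_ M).inv
    · simp only [compRep, id_tensorHom, tensorHom_id]
      monoidal
    · simp only [compRep, id_tensorHom, tensorHom_id]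
      monoidal
  · intro A B X Y l
    induction l using Quot.ind with | mk r =>
    obtain ⟨M, f, g⟩ := r
    show Quot.mk _ (compRep ⟨M, f, g⟩ ⟨𝟙_ C, (λ_ X).inv, (λ_ Y).hom⟩) = Quot.mk _ ⟨M, f, g⟩
    apply dinat_mk (ρ_ M).inv
    · simp only [compRep, id_tensorHom, tensorHom_id]
      monoidal
    · simp only [compRep, id_tensorHom, tensorHom_id]
      monoidal
  · intro A B X Y X' Y' X'' Y'' l₁ l₂ l₃
    induction l₁ using Quot.ind with | mk r =>
    induction l₂ using Quot.ind with | mk s =>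
    induction l₃ using Quot.ind with | mk t =>
    show Quot.mk _ (compRep (compRep r s) t) = Quot.mk _ (compRep r (compRep s t))
    apply dinat_mk (α_ r.M s.M t.M).inv
    · simp only [compRep, id_tensorHom, tensorHom_id, MonoidalCategory.whiskerLeft_comp,
        Category.assoc]
      monoidal
    · simp only [compRep, id_tensorHom, tensorHom_id, MonoidalCategory.whiskerLeft_comp,
        Category.assoc]
      monoidal
end

section
/- Characterization of sequential splits of cartesian lenses (Proposition 37, sequential clause). Let C be a category with chosen finite products, regarded as a symmetric monoidal category with tensor the binary product ⨯ and unit the terminal object. For all objects A, B, X, Y, X', Y' of C, the map sending a triple (f : A ⟶ X, g : A ⨯ Y ⟶ X', h : (A ⨯ Y) ⨯ Y' ⟶ B) to the class of (A, A ⨯ Y, ⟨id_A, f⟩ : A ⟶ A ⨯ X, ⟨id_{A ⨯ Y}, g⟩ : A ⨯ Y ⟶ (A ⨯ Y) ⨯ X', h) is a bijection between Hom(A,X) × Hom(A ⨯ Y, X') × Hom((A ⨯ Y) ⨯ Y', B) and LSeq((A,B);(X,Y),(X',Y')). -/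
/-!
Characterization of sequential splits of cartesian lenses.
-/

open CategoryTheory CategoryTheory.Limits

universe v u

variable {C : Type u} [Category.{v} C] [HasFiniteProducts C]

/-- A representative of a sequential split of cartesian lenses:
residuals `P`, `Q` together with the three parts of the split. -/
structure SeqRep (A B X Y X' Y' : C) where
  P : C
  Q : C
  f₀ : A ⟶ P ⨯ X
  f₁ : P ⨯ Y ⟶ Q ⨯ X'
  f₂ : Q ⨯ Y' ⟶ B

/-- Dinaturality in the residuals `P` and `Q`. -/
inductive SeqRel (A B X Y X' Y' : C) :
    SeqRep A B X Y X' Y' → SeqRep A B X Y X' Y' → Prop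
  | fst {P P' Q : C} (p : P ⟶ P') (f₀ : A ⟶ P ⨯ X) (f₁ : P' ⨯ Y ⟶ Q ⨯ X')
      (f₂ : Q ⨯ Y' ⟶ B) :
      SeqRel A B X Y X' Y' ⟨P', Q, f₀ ≫ prod.map p (𝟙 X), f₁, f₂⟩
        ⟨P, Q, f₀, prod.map p (𝟙 Y) ≫ f₁, f₂⟩
  | snd {P Q Q' : C} (q : Q ⟶ Q') (f₀ : A ⟶ P ⨯ X) (f₁ : P ⨯ Y ⟶ Q ⨯ X')
      (f₂ : Q' ⨯ Y' ⟶ B) :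
      SeqRel A B X Y X' Y' ⟨P, Q', f₀, f₁ ≫ prod.map q (𝟙 X'), f₂⟩
        ⟨P, Q, f₀, f₁, prod.map q (𝟙 Y') ≫ f₂⟩

/-- Sequential splits of cartesian lenses. -/
abbrev LSeq (A B X Y X' Y' : C) : Type max u v := Quot (SeqRel A B X Y X' Y')

/-- Normal form of a sequential split representative. -/
noncomputable def seqNorm {A B X Y X' Y' : C} (r : SeqRep A B X Y X' Y') :
    (A ⟶ X) × (A ⨯ Y ⟶ X') × ((A ⨯ Y) ⨯ Y' ⟶ B) :=
  ⟨r.f₀ ≫ prod.snd,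
   prod.map (r.f₀ ≫ prod.fst) (𝟙 Y) ≫ r.f₁ ≫ prod.snd,
   prod.map (prod.map (r.f₀ ≫ prod.fst) (𝟙 Y) ≫ r.f₁ ≫ prod.fst) (𝟙 Y') ≫ r.f₂⟩

theorem seqNorm_spec {A B X Y X' Y' : C} (r : SeqRep A B X Y X' Y') :
    (Quot.mk (SeqRel A B X Y X' Y') r) =
      Quot.mk _ ⟨A, A ⨯ Y, prod.lift (𝟙 A) (seqNorm r).1,
        prod.lift (𝟙 (A ⨯ Y)) (seqNorm r).2.1, (seqNorm r).2.2⟩ := by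
  obtain ⟨P, Q, f₀, f₁, f₂⟩ := r
  have h1 : f₀ = prod.lift (𝟙 A) (f₀ ≫ prod.snd) ≫ prod.map (f₀ ≫ prod.fst) (𝟙 X) := by
    apply Limits.prod.hom_ext <;> simp [prod.lift_fst, prod.lift_snd]
  have step1 : (Quot.mk (SeqRel A B X Y X' Y') ⟨P, Q, f₀, f₁, f₂⟩) =
      Quot.mk _ ⟨A, Q, prod.lift (𝟙 A) (f₀ ≫ prod.snd),
        prod.map (f₀ ≫ prod.fst) (𝟙 Y) ≫ f₁, f₂⟩ := by
    conv_lhs => rw [h1]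
    exact Quot.sound (SeqRel.fst (f₀ ≫ prod.fst) (prod.lift (𝟙 A) (f₀ ≫ prod.snd)) f₁ f₂)
  set f₁' : A ⨯ Y ⟶ Q ⨯ X' := prod.map (f₀ ≫ prod.fst) (𝟙 Y) ≫ f₁ with hf₁'
  have h2 : f₁' = prod.lift (𝟙 (A ⨯ Y)) (f₁' ≫ prod.snd) ≫ prod.map (f₁' ≫ prod.fst) (𝟙 X') := by
    apply Limits.prod.hom_ext <;> simp [prod.lift_fst, prod.lift_snd]
  have step2 : (Quot.mk (SeqRel A B X Y X' Y') ⟨A, Q, prod.lift (𝟙 A) (f₀ ≫ prod.snd), f₁', f₂⟩) =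
      Quot.mk _ ⟨A, A ⨯ Y, prod.lift (𝟙 A) (f₀ ≫ prod.snd),
        prod.lift (𝟙 (A ⨯ Y)) (f₁' ≫ prod.snd),
        prod.map (f₁' ≫ prod.fst) (𝟙 Y') ≫ f₂⟩ := by
    conv_lhs => rw [h2]
    exact Quot.sound (SeqRel.snd (f₁' ≫ prod.fst) (prod.lift (𝟙 A) (f₀ ≫ prod.snd))
      (prod.lift (𝟙 (A ⨯ Y)) (f₁' ≫ prod.snd)) f₂)
  rw [step1, step2]
  simp [seqNorm, hf₁']

/-- Over a category with chosen finite products, the map sending a triple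
`(f : A ⟶ X, g : A ⨯ Y ⟶ X', h : (A ⨯ Y) ⨯ Y' ⟶ B)` to the sequential split
with residuals `A` and `A ⨯ Y`, first part `⟨id_A, f⟩`, second part
`⟨id_{A ⨯ Y}, g⟩` and third part `h`, is a bijection onto the set of sequential
splits of cartesian lenses. -/
theorem cartesian_lenses_seq (C : Type u) [Category.{v} C] [HasFiniteProducts C]
    (A B X Y X' Y' : C) :
    Function.Bijective
      (fun p : (A ⟶ X) × (A ⨯ Y ⟶ X') × ((A ⨯ Y) ⨯ Y' ⟶ B) =>
        (Quot.mk _ ⟨A, A ⨯ Y, prod.lift (𝟙 A) p.1, prod.lift (𝟙 (A ⨯ Y)) p.2.1, p.2.2⟩ :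
          LSeq A B X Y X' Y')) := by
  apply Function.bijective_iff_has_inverse.mpr
  refine ⟨Quot.lift (seqNorm) ?_, ?_, ?_⟩
  · intro a b hab
    cases hab with
    | fst p f₀ f₁ f₂ =>
        refine Prod.ext ?_ (Prod.ext ?_ ?_) <;> simp [seqNorm, prod.map_map_assoc]
    | snd q f₀ f₁ f₂ =>
        refine Prod.ext ?_ (Prod.ext ?_ ?_) <;> simp [seqNorm, prod.map_map_assoc]
  · intro p
    refine Prod.ext ?_ (Prod.ext ?_ ?_) <;> simp [seqNorm, prod.lift_fst, prod.lift_snd, prod.lift_fst_assoc, prod.lift_snd_assoc]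
  · intro x
    induction x using Quot.ind with
    | _ r =>
      simp only
      exact (seqNorm_spec r).symm
end

section
/- Characterization of parallel splits of cartesian lenses (Proposition 37, parallel clause). Let C be a category with chosen finite products, regarded as a symmetric monoidal category with tensor the binary product ⨯ and unit the terminal object. For all objects A, B, X, Y, X', Y' of C, the map sending a pair (f : A ⟶ X ⨯ X', g : A ⨯ (Y ⨯ Y') ⟶ B), up to the coherence isomorphism A ⨯ Y ⨯ Y' ≅ A ⨯ (Y ⨯ Y'), to the class of (A, ⟨id_A, f⟩ : A ⟶ A ⨯ (X ⨯ X'), g) is a bijection between Hom(A, X ⨯ X') × Hom(A ⨯ Y ⨯ Y', B) and LPar((A,B);(X,Y),(X',Y')). -/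
/-!
Characterization of parallel splits of cartesian lenses.
-/

open CategoryTheory CategoryTheory.Limits

universe v u

variable {C : Type u} [Category.{v} C] [HasFiniteProducts C]

/-- A representative of a parallel split of cartesian lenses:
a residual `P` together with the two parts of the split. -/
structure ParRep (A B X Y X' Y' : C) where
  P : C
  f₀ : A ⟶ P ⨯ (X ⨯ X')
  f₁ : P ⨯ (Y ⨯ Y') ⟶ B

/-- Dinaturality in the residual `P`. -/
inductive ParRel (A B X Y X' Y' : C) :
    ParRep A B X Y X' Y' → ParRep A B X Y X' Y' → Prop
  | dinat {P P' : C} (p : P ⟶ P') (f₀ : A ⟶ P ⨯ (X ⨯ X'))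
      (f₁ : P' ⨯ (Y ⨯ Y') ⟶ B) :
      ParRel A B X Y X' Y'
        ⟨P', f₀ ≫ prod.map p (prod.map (𝟙 X) (𝟙 X')), f₁⟩
        ⟨P, f₀, prod.map p (prod.map (𝟙 Y) (𝟙 Y')) ≫ f₁⟩

/-- Parallel splits of cartesian lenses. -/
abbrev LPar (A B X Y X' Y' : C) : Type max u v := Quot (ParRel A B X Y X' Y')

/-- The inverse map on representatives. -/
noncomputable def parInv (A B X Y X' Y' : C) (r : ParRep A B X Y X' Y') :
    (A ⟶ X ⨯ X') × ((A ⨯ Y) ⨯ Y' ⟶ B) :=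
  ⟨r.f₀ ≫ prod.snd,
    (prod.associator A Y Y').hom ≫ prod.map (r.f₀ ≫ prod.fst) (𝟙 (Y ⨯ Y')) ≫ r.f₁⟩

theorem parInv_sound (A B X Y X' Y' : C) {r s : ParRep A B X Y X' Y'}
    (h : ParRel A B X Y X' Y' r s) :
    parInv A B X Y X' Y' r = parInv A B X Y X' Y' s := by
  cases h with
  | dinat p f₀ f₁ =>
    unfold parInv
    simp [prod.map_map, prod.map_id_id]

/-- Over a category with chosen finite products, the map sending a pair
`(f : A ⟶ X ⨯ X', g : (A ⨯ Y) ⨯ Y' ⟶ B)`, up to the coherence isomorphism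
`(A ⨯ Y) ⨯ Y' ≅ A ⨯ (Y ⨯ Y')`, to the parallel split with residual `A`,
first part `⟨id_A, f⟩` and second part `g`, is a bijection onto the set of
parallel splits of cartesian lenses. -/
theorem cartesian_lenses_par (C : Type u) [Category.{v} C] [HasFiniteProducts C]
    (A B X Y X' Y' : C) :
    Function.Bijective
      (fun p : (A ⟶ X ⨯ X') × ((A ⨯ Y) ⨯ Y' ⟶ B) =>
        (Quot.mk _ ⟨A, prod.lift (𝟙 A) p.1, (prod.associator A Y Y').inv ≫ p.2⟩ :
          LPar A B X Y X' Y')) := by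
  rw [Function.bijective_iff_has_inverse]
  refine ⟨Quot.lift (parInv A B X Y X' Y') (fun r s h => parInv_sound A B X Y X' Y' h),
    ?_, ?_⟩
  · rintro ⟨f, g⟩
    unfold parInv
    refine Prod.ext ?_ ?_ <;>
      simp only [prod.lift_snd, prod.lift_fst, prod.map_id_id, Category.id_comp,
        Iso.hom_inv_id_assoc]
  · intro q
    induction q using Quot.ind with
    | _ r =>
      obtain ⟨P, f₀, f₁⟩ := r
      simp only [Quot.lift]
      unfold parInv
      simp only
      have key := ParRel.dinat (A := A) (B := B) (X := X) (Y := Y) (X' := X') (Y' := Y')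
        (f₀ ≫ prod.fst) (prod.lift (𝟙 A) (f₀ ≫ prod.snd)) f₁
      have h1 : prod.lift (𝟙 A) (f₀ ≫ prod.snd) ≫
          prod.map (f₀ ≫ prod.fst) (prod.map (𝟙 X) (𝟙 X')) = f₀ := by
        rw [prod.lift_map, prod.map_id_id, Category.comp_id, Category.id_comp]
        exact (prod.hom_ext (prod.lift_fst _ _) (prod.lift_snd _ _))
      have h2 : (prod.associator A Y Y').inv ≫ (prod.associator A Y Y').hom ≫
          prod.map (f₀ ≫ prod.fst) (𝟙 (Y ⨯ Y')) ≫ f₁ =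
          prod.map (f₀ ≫ prod.fst) (prod.map (𝟙 Y) (𝟙 Y')) ≫ f₁ := by
        rw [Iso.inv_hom_id_assoc, prod.map_id_id]
      rw [h1] at key
      rw [h2]
      exact (Quot.sound key).symm
end

section
/- Promonoidal associator of spliced arrows (Lemma: promonoidal splice associator). Let C be a category and A, B, X, Y, X', Y', X'', Y'' objects of C. Let Q₁ be the quotient of the type of tuples (U V : C, f₀ : A ⟶ X, f₁ : Y ⟶ U, f₂ : V ⟶ B, g₀ : U ⟶ X', g₁ : Y' ⟶ X'', g₂ : Y'' ⟶ V) by the equivalence relation generated by: for all u : U ⟶ U', v : V' ⟶ V, g₀' : U' ⟶ X' and g₂' : Y'' ⟶ V', the tuple (U', V', f₀, f₁ ≫ u, v ≫ f₂, g₀', g₁, g₂') is identified with (U, V, f₀, f₁, f₂, u ≫ g₀', g₁, g₂' ≫ v). Let Q₂ be the quotient of the type of tuples (U V : C, h₀ : A ⟶ U, h₁ : V ⟶ X'', h₂ : Y'' ⟶ B, k₀ : U ⟶ X, k₁ : Y ⟶ X', k₂ : Y' ⟶ V) by the analogous dinaturality relation in (U,V). Then the maps sending the class of (f₀, f₁,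 f₂, g₀, g₁, g₂) to (f₀, f₁ ≫ g₀, g₁, g₂ ≫ f₂) and the class of (h₀, h₁, h₂, k₀, k₁, k₂) to (h₀ ≫ k₀, k₁, k₂ ≫ h₁, h₂) are well-defined bijections from Q₁ and Q₂, respectively, to Hom(A,X) × Hom(Y,X') × Hom(Y',X'') × Hom(Y'',B); in particular Q₁ ≅ Q₂. -/
/-!
Promonoidal associator of spliced arrows.
-/

open CategoryTheory

universe v u

variable {C : Type u} [Category.{v} C]

/-- A representative of a split of spliced arrows filled on its second hole:
an outer two-hole splice `(f₀, f₁, f₂)` with middle objects `(U,V)` for its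
second hole, and an inner two-hole splice `(g₀, g₁, g₂)` from `(U,V)`. -/
structure SpliceRep₁ (A B X Y X' Y' X'' Y'' : C) where
  U : C
  V : C
  f₀ : A ⟶ X
  f₁ : Y ⟶ U
  f₂ : V ⟶ B
  g₀ : U ⟶ X'
  g₁ : Y' ⟶ X''
  g₂ : Y'' ⟶ V

/-- Dinaturality in `(U,V)` for `SpliceRep₁`. -/
inductive SpliceRel₁ (A B X Y X' Y' X'' Y'' : C) :
    SpliceRep₁ A B X Y X' Y' X'' Y'' → SpliceRep₁ A B X Y X' Y' X'' Y'' → Prop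
  | dinat {U U' V V' : C} (u : U ⟶ U') (v : V' ⟶ V)
      (f₀ : A ⟶ X) (f₁ : Y ⟶ U) (f₂ : V ⟶ B)
      (g₀' : U' ⟶ X') (g₁ : Y' ⟶ X'') (g₂' : Y'' ⟶ V') :
      SpliceRel₁ A B X Y X' Y' X'' Y''
        ⟨U', V', f₀, f₁ ≫ u, v ≫ f₂, g₀', g₁, g₂'⟩
        ⟨U, V, f₀, f₁, f₂, u ≫ g₀', g₁, g₂' ≫ v⟩

/-- A representative of a split of spliced arrows filled on its first hole:
an outer two-hole splice `(h₀, h₁, h₂)` with middle objects `(U,V)` for its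
first hole, and an inner two-hole splice `(k₀, k₁, k₂)` from `(U,V)`. -/
structure SpliceRep₂ (A B X Y X' Y' X'' Y'' : C) where
  U : C
  V : C
  h₀ : A ⟶ U
  h₁ : V ⟶ X''
  h₂ : Y'' ⟶ B
  k₀ : U ⟶ X
  k₁ : Y ⟶ X'
  k₂ : Y' ⟶ V

/-- Dinaturality in `(U,V)` for `SpliceRep₂`. -/
inductive SpliceRel₂ (A B X Y X' Y' X'' Y'' : C) :
    SpliceRep₂ A B X Y X' Y' X'' Y'' → SpliceRep₂ A B X Y X' Y' X'' Y'' → Prop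
  | dinat {U U' V V' : C} (u : U ⟶ U') (v : V' ⟶ V)
      (h₀ : A ⟶ U) (h₁ : V ⟶ X'') (h₂ : Y'' ⟶ B)
      (k₀' : U' ⟶ X) (k₁ : Y ⟶ X') (k₂' : Y' ⟶ V') :
      SpliceRel₂ A B X Y X' Y' X'' Y''
        ⟨U', V', h₀ ≫ u, v ≫ h₁, h₂, k₀', k₁, k₂'⟩
        ⟨U, V, h₀, h₁, h₂, u ≫ k₀', k₁, k₂' ≫ v⟩

/-! Each dinaturality class contains the representative whose inner splice consists of
identities (take `u`, `v` to be the inner arrows themselves), and composing along the contour is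
invariant under dinaturality; so a class is determined by its contour, which can be arbitrary. -/

def Quot.equivOfRightInverse {α β : Sort*} {r : α → α → Prop} (f : α → β)
    (hf : ∀ a b, r a b → f a = f b) (g : β → α) (hfg : Function.RightInverse g f)
    (hgf : ∀ a, r (g (f a)) a) : Quot r ≃ β where
  toFun := Quot.lift f hf
  invFun b := Quot.mk r (g b)
  left_inv := Quot.ind fun a => Quot.sound (hgf a)
  right_inv := hfg

namespace SpliceRep₁

variable {A B X Y X' Y' X'' Y'' : C}

def contour (r : SpliceRep₁ A B X Y X' Y' X'' Y'') :
    (A ⟶ X) × (Y ⟶ X') × (Y' ⟶ X'') × (Y'' ⟶ B) :=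
  (r.f₀, r.f₁ ≫ r.g₀, r.g₁, r.g₂ ≫ r.f₂)

def ofContour (p : (A ⟶ X) × (Y ⟶ X') × (Y' ⟶ X'') × (Y'' ⟶ B)) :
    SpliceRep₁ A B X Y X' Y' X'' Y'' :=
  ⟨X', Y'', p.1, p.2.1, p.2.2.2, 𝟙 _, p.2.2.1, 𝟙 _⟩

theorem contour_eq_of_rel {r s : SpliceRep₁ A B X Y X' Y' X'' Y''}
    (h : SpliceRel₁ A B X Y X' Y' X'' Y'' r s) : r.contour = s.contour := by
  cases h
  simp [contour]

theorem contour_ofContour (p : (A ⟶ X) × (Y ⟶ X') × (Y' ⟶ X'') × (Y'' ⟶ B)) :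
    (ofContour p).contour = p := by
  simp [ofContour, contour]

theorem rel_ofContour_contour (r : SpliceRep₁ A B X Y X' Y' X'' Y'') :
    SpliceRel₁ A B X Y X' Y' X'' Y'' (ofContour r.contour) r := by
  have h := SpliceRel₁.dinat r.g₀ r.g₂ r.f₀ r.f₁ r.f₂ (𝟙 _) r.g₁ (𝟙 _)
  rwa [Category.comp_id, Category.id_comp] at h

def quotEquivContour :
    Quot (SpliceRel₁ A B X Y X' Y' X'' Y'') ≃ (A ⟶ X) × (Y ⟶ X') × (Y' ⟶ X'') × (Y'' ⟶ B) :=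
  Quot.equivOfRightInverse contour (fun _ _ => contour_eq_of_rel) ofContour contour_ofContour
    rel_ofContour_contour

end SpliceRep₁

namespace SpliceRep₂

variable {A B X Y X' Y' X'' Y'' : C}

def contour (r : SpliceRep₂ A B X Y X' Y' X'' Y'') :
    (A ⟶ X) × (Y ⟶ X') × (Y' ⟶ X'') × (Y'' ⟶ B) :=
  (r.h₀ ≫ r.k₀, r.k₁, r.k₂ ≫ r.h₁, r.h₂)

def ofContour (p : (A ⟶ X) × (Y ⟶ X') × (Y' ⟶ X'') × (Y'' ⟶ B)) :
    SpliceRep₂ A B X Y X' Y' X'' Y'' :=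
  ⟨X, Y', p.1, p.2.2.1, p.2.2.2, 𝟙 _, p.2.1, 𝟙 _⟩

theorem contour_eq_of_rel {r s : SpliceRep₂ A B X Y X' Y' X'' Y''}
    (h : SpliceRel₂ A B X Y X' Y' X'' Y'' r s) : r.contour = s.contour := by
  cases h
  simp [contour]

theorem contour_ofContour (p : (A ⟶ X) × (Y ⟶ X') × (Y' ⟶ X'') × (Y'' ⟶ B)) :
    (ofContour p).contour = p := by
  simp [ofContour, contour]

theorem rel_ofContour_contour (r : SpliceRep₂ A B X Y X' Y' X'' Y'') :
    SpliceRel₂ A B X Y X' Y' X'' Y'' (ofContour r.contour) r := by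
  have h := SpliceRel₂.dinat r.k₀ r.k₂ r.h₀ r.h₁ r.h₂ (𝟙 _) r.k₁ (𝟙 _)
  rwa [Category.comp_id, Category.id_comp] at h

def quotEquivContour :
    Quot (SpliceRel₂ A B X Y X' Y' X'' Y'') ≃ (A ⟶ X) × (Y ⟶ X') × (Y' ⟶ X'') × (Y'' ⟶ B) :=
  Quot.equivOfRightInverse contour (fun _ _ => contour_eq_of_rel) ofContour contour_ofContour
    rel_ofContour_contour

end SpliceRep₂

/-- The two ways of splitting a spliced arrow with three holes agree: both
quotients are in bijection with the set of quadruples of arrows, by the maps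
reading off the contour, and in particular they are isomorphic to each other. -/
theorem splice_promonoidal_associator (C : Type u) [Category.{v} C]
    (A B X Y X' Y' X'' Y'' : C) :
    ∃ (e₁ : Quot (SpliceRel₁ A B X Y X' Y' X'' Y'') →
        (A ⟶ X) × (Y ⟶ X') × (Y' ⟶ X'') × (Y'' ⟶ B))
      (e₂ : Quot (SpliceRel₂ A B X Y X' Y' X'' Y'') →
        (A ⟶ X) × (Y ⟶ X') × (Y' ⟶ X'') × (Y'' ⟶ B)),
      (∀ r : SpliceRep₁ A B X Y X' Y' X'' Y'',
          e₁ (Quot.mk _ r) = (r.f₀, r.f₁ ≫ r.g₀, r.g₁, r.g₂ ≫ r.f₂)) ∧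
      Function.Bijective e₁ ∧
      (∀ r : SpliceRep₂ A B X Y X' Y' X'' Y'',
          e₂ (Quot.mk _ r) = (r.h₀ ≫ r.k₀, r.k₁, r.k₂ ≫ r.h₁, r.h₂)) ∧
      Function.Bijective e₂ ∧
      Nonempty (Quot (SpliceRel₁ A B X Y X' Y' X'' Y'') ≃
        Quot (SpliceRel₂ A B X Y X' Y' X'' Y'')) := by
  exact ⟨SpliceRep₁.quotEquivContour, SpliceRep₂.quotEquivContour, fun _ => rfl,
    Equiv.bijective _, fun _ => rfl, Equiv.bijective _,
    ⟨SpliceRep₁.quotEquivContour.trans SpliceRep₂.quotEquivContour.symm⟩⟩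
end

section
/- Promonoidal left unitor of spliced arrows (Lemma: promonoidal splice left unitor). Let C be a category and A, B, X, Y objects of C. Let Q be the quotient of the type of tuples (U V : C, f₀ : A ⟶ U, f₁ : V ⟶ X, f₂ : Y ⟶ B, g : U ⟶ V) by the equivalence relation generated by: for all u : U ⟶ U', v : V' ⟶ V, f₁' : V' ⟶ X and g' : U' ⟶ V', the tuple (U', V', f₀ ≫ u, f₁', f₂, g') is identified with (U, V, f₀, v ≫ f₁', f₂, u ≫ g' ≫ v). Then the map sending the class of (f₀, f₁, f₂, g) to (f₀ ≫ g ≫ f₁, f₂) is a well-defined bijection from Q to Hom(A,X) × Hom(Y,B). -/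
/-!
Dinaturality with `u = f₀` and `v = f₁` identifies every representative `(U, V, f₀, f₁, f₂, g)`
with the normal form `(A, X, 𝟙, 𝟙, f₂, f₀ ≫ g ≫ f₁)`, so a class is determined by the composite
`f₀ ≫ g ≫ f₁` together with `f₂`; conversely the map is invariant because the generating relation
only re-brackets that composite.
-/

open CategoryTheory

universe v u

variable {C : Type u} [Category.{v} C]

/-- A representative of a split of spliced arrows whose first hole is filled by
a unit: an outer two-hole splice `(f₀, f₁, f₂)` with first hole `(U,V)` and a
filler `g : U ⟶ V`. -/
structure UnitRep (A B X Y : C) where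
  U : C
  V : C
  f₀ : A ⟶ U
  f₁ : V ⟶ X
  f₂ : Y ⟶ B
  g : U ⟶ V

/-- Dinaturality in `(U,V)`. -/
inductive UnitRel (A B X Y : C) : UnitRep A B X Y → UnitRep A B X Y → Prop
  | dinat {U U' V V' : C} (u : U ⟶ U') (v : V' ⟶ V)
      (f₀ : A ⟶ U) (f₁ : V ⟶ X) (f₂ : Y ⟶ B) (g' : U' ⟶ V') :
      UnitRel A B X Y
        ⟨U', V', f₀ ≫ u, v ≫ f₁, f₂, g'⟩
        ⟨U, V, f₀, f₁, f₂, u ≫ g' ≫ v⟩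

namespace UnitRep

variable {A B X Y : C}

def splice (r : UnitRep A B X Y) : (A ⟶ X) × (Y ⟶ B) :=
  (r.f₀ ≫ r.g ≫ r.f₁, r.f₂)

def ofSplice (p : (A ⟶ X) × (Y ⟶ B)) : UnitRep A B X Y :=
  ⟨A, X, 𝟙 A, 𝟙 X, p.2, p.1⟩

@[simp]
theorem splice_ofSplice (p : (A ⟶ X) × (Y ⟶ B)) : (ofSplice p).splice = p := by
  simp [splice, ofSplice]

theorem splice_eq_of_unitRel {r s : UnitRep A B X Y} (h : UnitRel A B X Y r s) :
    r.splice = s.splice := by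
  cases h
  simp [splice]

theorem quot_mk_eq_ofSplice_splice (r : UnitRep A B X Y) :
    Quot.mk (UnitRel A B X Y) r = Quot.mk _ (ofSplice r.splice) := by
  obtain ⟨U, V, f₀, f₁, f₂, g⟩ := r
  simpa [ofSplice, splice] using Quot.sound (UnitRel.dinat f₀ f₁ (𝟙 A) (𝟙 X) f₂ g)

variable (A B X Y) in
def unitorEquiv : Quot (UnitRel A B X Y) ≃ (A ⟶ X) × (Y ⟶ B) where
  toFun := Quot.lift splice fun _ _ => splice_eq_of_unitRel
  invFun p := Quot.mk _ (ofSplice p)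
  left_inv := Quot.ind fun r => (quot_mk_eq_ofSplice_splice r).symm
  right_inv := splice_ofSplice

end UnitRep

/-- The left unitor of the promonoidal category of spliced arrows: filling the
first hole of a two-hole splice by a unit yields, up to dinaturality, exactly a
spliced arrow, via the map `(f₀, f₁, f₂, g) ↦ (f₀ ≫ g ≫ f₁, f₂)`. -/
theorem splice_promonoidal_left_unitor (C : Type u) [Category.{v} C]
    (A B X Y : C) :
    ∃ e : Quot (UnitRel A B X Y) → (A ⟶ X) × (Y ⟶ B),
      (∀ r : UnitRep A B X Y, e (Quot.mk _ r) = (r.f₀ ≫ r.g ≫ r.f₁, r.f₂)) ∧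
      Function.Bijective e :=
  ⟨UnitRep.unitorEquiv A B X Y, fun _ => rfl, (UnitRep.unitorEquiv A B X Y).bijective⟩
end

section
/- Normalization of spliced monoidal arrows gives monoidal contexts, on hom-sets (Theorem 29, morphism case). Let (C, ⊗, I) be a monoidal category and A, B, X, Y objects of C. Let Q be the quotient of the type of tuples (U V U' V' : C, f : A ⟶ U ⊗ X ⊗ U', g : V ⊗ Y ⊗ V' ⟶ B, h : U ⟶ V, k : U' ⟶ V') by the equivalence relation generated by: (i) for all u : U ⟶ U₁, v : V₁ ⟶ V, h₁ : U₁ ⟶ V₁, the tuple (U₁, V₁, U', V', f ≫ (u ⊗ id_X ⊗ id_{U'}), (v ⊗ id_Y ⊗ id_{V'}) ≫ g, h₁, k) is identified with (U, V, U', V', f, g, u ≫ h₁ ≫ v, k); and (ii) for all u' : U' ⟶ U₁', v' : V₁' ⟶ V', k₁ : U₁' ⟶ V₁', the tuple (U, V, U₁', V₁', f ≫ (id_U ⊗ id_X ⊗ u'), (id_V ⊗ id_Y ⊗ v') ≫ g, h, k₁) is identified with (U, V, U', V', f, g, h, u' ≫ k₁ ≫ v'). Then the map sending the class of (U, V, U',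 V', f, g, h, k) to the class of (U, U', f, (h ⊗ id_Y ⊗ k) ≫ g) is a well-defined bijection from Q to MC((A,B);(X,Y)). -/
/-!
Normalization of spliced monoidal arrows gives monoidal contexts, on hom-sets.
-/

open CategoryTheory MonoidalCategory

universe v u

variable {C : Type u} [Category.{v} C] [MonoidalCategory C]

/-- A representative of a monoidal context from `(A,B)` to `(X,Y)`. -/
structure CtxRep (A B X Y : C) where
  M : C
  N : C
  f : A ⟶ M ⊗ X ⊗ N
  g : M ⊗ Y ⊗ N ⟶ B

/-- Dinaturality in the residuals of a monoidal context. -/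
inductive CtxRel (A B X Y : C) : CtxRep A B X Y → CtxRep A B X Y → Prop
  | dinat {M M' N N' : C} (m : M ⟶ M') (n : N ⟶ N')
      (f : A ⟶ M ⊗ X ⊗ N) (g' : M' ⊗ Y ⊗ N' ⟶ B) :
      CtxRel A B X Y ⟨M', N', f ≫ (m ⊗ₘ 𝟙 X ⊗ₘ n), g'⟩ ⟨M, N, f, (m ⊗ₘ 𝟙 Y ⊗ₘ n) ≫ g'⟩

/-- Monoidal contexts. -/
abbrev MC (A B X Y : C) : Type max u v := Quot (CtxRel A B X Y)

/-- A representative of a normalized spliced monoidal arrow: a parallel split with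
hole `(U ⊗ X ⊗ U', V ⊗ Y ⊗ V')` whose unit holes are filled by `h : U ⟶ V` and
`k : U' ⟶ V'`. -/
structure NRep (A B X Y : C) where
  U : C
  V : C
  U' : C
  V' : C
  f : A ⟶ U ⊗ X ⊗ U'
  g : V ⊗ Y ⊗ V' ⟶ B
  h : U ⟶ V
  k : U' ⟶ V'

/-- Dinaturality in `(U,V)` and in `(U',V')`. -/
inductive NRel (A B X Y : C) : NRep A B X Y → NRep A B X Y → Prop
  | fst {U U₁ V V₁ U' V' : C} (u : U ⟶ U₁) (v : V₁ ⟶ V)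
      (f : A ⟶ U ⊗ X ⊗ U') (g : V ⊗ Y ⊗ V' ⟶ B) (h₁ : U₁ ⟶ V₁) (k : U' ⟶ V') :
      NRel A B X Y
        ⟨U₁, V₁, U', V', f ≫ (u ⊗ₘ 𝟙 X ⊗ₘ 𝟙 U'), (v ⊗ₘ 𝟙 Y ⊗ₘ 𝟙 V') ≫ g, h₁, k⟩
        ⟨U, V, U', V', f, g, u ≫ h₁ ≫ v, k⟩
  | snd {U V U' U₁' V' V₁' : C} (u' : U' ⟶ U₁') (v' : V₁' ⟶ V')
      (f : A ⟶ U ⊗ X ⊗ U') (g : V ⊗ Y ⊗ V' ⟶ B) (h : U ⟶ V) (k₁ : U₁' ⟶ V₁') :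
      NRel A B X Y
        ⟨U, V, U₁', V₁', f ≫ (𝟙 U ⊗ₘ 𝟙 X ⊗ₘ u'), (𝟙 V ⊗ₘ 𝟙 Y ⊗ₘ v') ≫ g, h, k₁⟩
        ⟨U, V, U', V', f, g, h, u' ≫ k₁ ≫ v'⟩

private lemma t3 {P P' P'' Q Q' Q'' R R' R'' : C} (f₁ : P ⟶ P') (f₂ : Q ⟶ Q') (f₃ : R ⟶ R')
    (g₁ : P' ⟶ P'') (g₂ : Q' ⟶ Q'') (g₃ : R' ⟶ R'') :
    (f₁ ⊗ₘ f₂ ⊗ₘ f₃) ≫ (g₁ ⊗ₘ g₂ ⊗ₘ g₃) = (f₁ ≫ g₁) ⊗ₘ (f₂ ≫ g₂) ⊗ₘ (f₃ ≫ g₃) := by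
  rw [tensorHom_comp_tensorHom, tensorHom_comp_tensorHom]

private lemma eFun_sound (A B X Y : C) :
    ∀ r s, NRel A B X Y r s →
      (Quot.mk (CtxRel A B X Y) ⟨r.U, r.U', r.f, (r.h ⊗ₘ 𝟙 Y ⊗ₘ r.k) ≫ r.g⟩ :
        MC A B X Y) = Quot.mk _ ⟨s.U, s.U', s.f, (s.h ⊗ₘ 𝟙 Y ⊗ₘ s.k) ≫ s.g⟩ := by
  rintro _ _ (⟨u, v, f, g, h₁, k⟩ | ⟨u', v', f, g, h, k₁⟩)
  · dsimp only
    have e1 : (u ⊗ₘ 𝟙 Y ⊗ₘ 𝟙 _) ≫ (h₁ ⊗ₘ 𝟙 Y ⊗ₘ k) ≫ (v ⊗ₘ 𝟙 Y ⊗ₘ 𝟙 _) ≫ g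
        = ((u ≫ h₁ ≫ v) ⊗ₘ 𝟙 Y ⊗ₘ k) ≫ g := by
      simp only [← Category.assoc, t3, Category.comp_id, Category.id_comp]
    rw [← e1]
    exact Quot.sound (CtxRel.dinat u (𝟙 _) f _)
  · dsimp only
    have e1 : (𝟙 _ ⊗ₘ 𝟙 Y ⊗ₘ u') ≫ (h ⊗ₘ 𝟙 Y ⊗ₘ k₁) ≫ (𝟙 _ ⊗ₘ 𝟙 Y ⊗ₘ v') ≫ g
        = (h ⊗ₘ 𝟙 Y ⊗ₘ (u' ≫ k₁ ≫ v')) ≫ g := by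
      simp only [← Category.assoc, t3, Category.comp_id, Category.id_comp]
    rw [← e1]
    exact Quot.sound (CtxRel.dinat (𝟙 _) u' f _)

/-- The forward map. -/
def eFun (A B X Y : C) : Quot (NRel A B X Y) → MC A B X Y :=
  Quot.lift (fun r => Quot.mk _ ⟨r.U, r.U', r.f, (r.h ⊗ₘ 𝟙 Y ⊗ₘ r.k) ≫ r.g⟩)
    (eFun_sound A B X Y)

/-- Key lemma: pushing the fillers into `f`. -/
theorem nrep_eq_mid {A B X Y : C} {M M' N N' : C} (m : M ⟶ M') (n : N ⟶ N')
    (f : A ⟶ M ⊗ X ⊗ N) (g' : M' ⊗ Y ⊗ N' ⟶ B) :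
    Quot.mk (NRel A B X Y) ⟨M', M', N', N', f ≫ (m ⊗ₘ 𝟙 X ⊗ₘ n), g', 𝟙 M', 𝟙 N'⟩
      = Quot.mk _ ⟨M, M', N, N', f, g', m, n⟩ := by
  have s1 : Quot.mk (NRel A B X Y)
      ⟨M', M', N, N', f ≫ (m ⊗ₘ 𝟙 X ⊗ₘ 𝟙 N), (𝟙 M' ⊗ₘ 𝟙 Y ⊗ₘ 𝟙 N') ≫ g', 𝟙 M', n⟩
      = Quot.mk _ ⟨M, M', N, N', f, g', m ≫ 𝟙 M' ≫ 𝟙 M', n⟩ :=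
    Quot.sound (NRel.fst m (𝟙 M') f g' (𝟙 M') n)
  have s2 : Quot.mk (NRel A B X Y)
      ⟨M', M', N', N', (f ≫ (m ⊗ₘ 𝟙 X ⊗ₘ 𝟙 N)) ≫ (𝟙 M' ⊗ₘ 𝟙 X ⊗ₘ n),
        (𝟙 M' ⊗ₘ 𝟙 Y ⊗ₘ 𝟙 N') ≫ (𝟙 M' ⊗ₘ 𝟙 Y ⊗ₘ 𝟙 N') ≫ g', 𝟙 M', 𝟙 N'⟩
      = Quot.mk _ ⟨M', M', N, N', f ≫ (m ⊗ₘ 𝟙 X ⊗ₘ 𝟙 N),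
          (𝟙 M' ⊗ₘ 𝟙 Y ⊗ₘ 𝟙 N') ≫ g', 𝟙 M', n ≫ 𝟙 N' ≫ 𝟙 N'⟩ :=
    Quot.sound (NRel.snd n (𝟙 N') (f ≫ (m ⊗ₘ 𝟙 X ⊗ₘ 𝟙 N)) _ (𝟙 M') (𝟙 N'))
  have eA : (𝟙 M' ⊗ₘ 𝟙 Y ⊗ₘ 𝟙 N') ≫ g' = g' := by
    rw [id_tensorHom_id, id_tensorHom_id, Category.id_comp]
  have eB : (f ≫ (m ⊗ₘ 𝟙 X ⊗ₘ 𝟙 N)) ≫ (𝟙 M' ⊗ₘ 𝟙 X ⊗ₘ n) = f ≫ (m ⊗ₘ 𝟙 X ⊗ₘ n) := by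
    simp only [Category.assoc, t3, Category.comp_id, Category.id_comp]
  simp only [eA, eB, Category.comp_id, Category.id_comp] at s1 s2
  rw [s2, s1]

/-- Dual key lemma: pushing the fillers into `g` instead. -/
theorem nrep_eq_mid' {A B X Y : C} {M M' N N' : C} (m : M ⟶ M') (n : N ⟶ N')
    (f : A ⟶ M ⊗ X ⊗ N) (g' : M' ⊗ Y ⊗ N' ⟶ B) :
    Quot.mk (NRel A B X Y) ⟨M, M, N, N, f, (m ⊗ₘ 𝟙 Y ⊗ₘ n) ≫ g', 𝟙 M, 𝟙 N⟩
      = Quot.mk _ ⟨M, M', N, N', f, g', m, n⟩ := by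
  have s1 : Quot.mk (NRel A B X Y)
      ⟨M, M, N, N', f ≫ (𝟙 M ⊗ₘ 𝟙 X ⊗ₘ 𝟙 N), (m ⊗ₘ 𝟙 Y ⊗ₘ 𝟙 N') ≫ g', 𝟙 M, n⟩
      = Quot.mk _ ⟨M, M', N, N', f, g', 𝟙 M ≫ 𝟙 M ≫ m, n⟩ :=
    Quot.sound (NRel.fst (𝟙 M) m f g' (𝟙 M) n)
  have s2 : Quot.mk (NRel A B X Y)
      ⟨M, M, N, N, (f ≫ (𝟙 M ⊗ₘ 𝟙 X ⊗ₘ 𝟙 N)) ≫ (𝟙 M ⊗ₘ 𝟙 X ⊗ₘ 𝟙 N),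
        (𝟙 M ⊗ₘ 𝟙 Y ⊗ₘ n) ≫ (m ⊗ₘ 𝟙 Y ⊗ₘ 𝟙 N') ≫ g', 𝟙 M, 𝟙 N⟩
      = Quot.mk _ ⟨M, M, N, N', f ≫ (𝟙 M ⊗ₘ 𝟙 X ⊗ₘ 𝟙 N),
          (m ⊗ₘ 𝟙 Y ⊗ₘ 𝟙 N') ≫ g', 𝟙 M, 𝟙 N ≫ 𝟙 N ≫ n⟩ :=
    Quot.sound (NRel.snd (𝟙 N) n (f ≫ (𝟙 M ⊗ₘ 𝟙 X ⊗ₘ 𝟙 N)) _ (𝟙 M) (𝟙 N))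
  have e2 : (𝟙 M ⊗ₘ 𝟙 Y ⊗ₘ n) ≫ (m ⊗ₘ 𝟙 Y ⊗ₘ 𝟙 N') ≫ g' = (m ⊗ₘ 𝟙 Y ⊗ₘ n) ≫ g' := by
    simp only [← Category.assoc, t3, Category.comp_id, Category.id_comp]
  have eA : f ≫ (𝟙 M ⊗ₘ 𝟙 X ⊗ₘ 𝟙 N) = f := by
    rw [id_tensorHom_id, id_tensorHom_id, Category.comp_id]
  simp only [e2, eA, Category.id_comp, Category.comp_id] at s1 s2
  rw [s2, s1]

/-- Every representative equals one with identity fillers. -/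
theorem nrep_normalize {A B X Y : C} (r : NRep A B X Y) :
    Quot.mk (NRel A B X Y) ⟨r.U, r.U, r.U', r.U', r.f, (r.h ⊗ₘ 𝟙 Y ⊗ₘ r.k) ≫ r.g,
        𝟙 r.U, 𝟙 r.U'⟩ = Quot.mk _ r := by
  obtain ⟨U, V, U', V', f, g, h, k⟩ := r
  exact nrep_eq_mid' h k f g

/-- The inverse map. -/
def eInv (A B X Y : C) : MC A B X Y → Quot (NRel A B X Y) :=
  Quot.lift (fun c => Quot.mk _ ⟨c.M, c.M, c.N, c.N, c.f, c.g, 𝟙 c.M, 𝟙 c.N⟩) (by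
    rintro _ _ ⟨m, n, f, g'⟩
    dsimp only
    rw [nrep_eq_mid m n f g', ← nrep_eq_mid' m n f g'])

/-- The hom-sets of the normalization of the produoidal category of spliced
monoidal arrows are in bijection with monoidal contexts, by filling the two unit
holes. -/
theorem normalization_of_splice_is_contexts (C : Type u) [Category.{v} C]
    [MonoidalCategory C] (A B X Y : C) :
    ∃ e : Quot (NRel A B X Y) → MC A B X Y,
      (∀ r : NRep A B X Y,
          e (Quot.mk _ r) = Quot.mk _ ⟨r.U, r.U', r.f, (r.h ⊗ₘ 𝟙 Y ⊗ₘ r.k) ≫ r.g⟩) ∧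
      Function.Bijective e := by
  refine ⟨eFun A B X Y, fun r => rfl, ?_⟩
  have left : ∀ q, eInv A B X Y (eFun A B X Y q) = q := by
    intro q
    induction q using Quot.ind with | _ r => ?_
    show Quot.mk _ ⟨r.U, r.U, r.U', r.U', r.f, (r.h ⊗ₘ 𝟙 Y ⊗ₘ r.k) ≫ r.g, 𝟙 r.U, 𝟙 r.U'⟩
      = Quot.mk _ r
    exact nrep_normalize r
  have right : ∀ c, eFun A B X Y (eInv A B X Y c) = c := by
    intro c
    induction c using Quot.ind with | _ x => ?_
    show Quot.mk _ ⟨x.M, x.N, x.f, (𝟙 x.M ⊗ₘ 𝟙 Y ⊗ₘ 𝟙 x.N) ≫ x.g⟩ = Quot.mk _ x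
    simp only [id_tensorHom_id, Category.id_comp]
  exact Function.bijective_iff_has_inverse.mpr ⟨eInv A B X Y, left, right⟩
end

section
/- Sequential right unitor for monoidal lenses (Lemma: monoidal lenses sequential right unitor). Let (C, ⊗, I, σ) be a symmetric monoidal category and A, B, X, Y objects of C. Let Q be the quotient of the type of tuples (U V P Q : C, f₀ : A ⟶ P ⊗ X, f₁ : P ⊗ Y ⟶ Q ⊗ U, f₂ : Q ⊗ V ⟶ B, g : U ⟶ V) by the equivalence relation generated by: (i) dinaturality in the residuals P and Q as in LSeq; and (ii) hole-dinaturality: for every (P₀ : C, a : U ⟶ P₀ ⊗ U', b : P₀ ⊗ V' ⟶ V) and g' : U' ⟶ V', the tuple (U', V', P, Q ⊗ P₀, f₀, f₁ ≫ (id_Q ⊗ a), (id_Q ⊗ b) ≫ f₂, g') is identified with (U, V, P, Q, f₀, f₁, f₂, a ≫ (id_{P₀} ⊗ g') ≫ b). Then the map sending the class of (U, V, P, Q, f₀, f₁, f₂, g) to the class of (P, f₀, f₁ ≫ (id_Q ⊗ g) ≫ f₂) is a well-defined bijection from Q to LC((A,B);(X,Y)). -/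
/-!
Sequential right unitor for monoidal lenses.
-/

open CategoryTheory MonoidalCategory

universe v u

variable {C : Type u} [Category.{v} C] [MonoidalCategory C] [SymmetricCategory C]

/-- A representative of a sequential split of monoidal lenses whose second hole
`(U,V)` is filled by a unit `g : U ⟶ V`. -/
structure URep (A B X Y : C) where
  U : C
  V : C
  P : C
  Q : C
  f₀ : A ⟶ P ⊗ X
  f₁ : P ⊗ Y ⟶ Q ⊗ U
  f₂ : Q ⊗ V ⟶ B
  g : U ⟶ V

/-- Dinaturality in the residuals `P`, `Q` and in the hole `(U,V)`. -/
inductive URel (A B X Y : C) : URep A B X Y → URep A B X Y → Prop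
  | fst {U V P P' Q : C} (p : P ⟶ P')
      (f₀ : A ⟶ P ⊗ X) (f₁ : P' ⊗ Y ⟶ Q ⊗ U) (f₂ : Q ⊗ V ⟶ B) (g : U ⟶ V) :
      URel A B X Y ⟨U, V, P', Q, f₀ ≫ (p ⊗ₘ 𝟙 X), f₁, f₂, g⟩
        ⟨U, V, P, Q, f₀, (p ⊗ₘ 𝟙 Y) ≫ f₁, f₂, g⟩
  | snd {U V P Q Q' : C} (q : Q ⟶ Q')
      (f₀ : A ⟶ P ⊗ X) (f₁ : P ⊗ Y ⟶ Q ⊗ U) (f₂ : Q' ⊗ V ⟶ B) (g : U ⟶ V) :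
      URel A B X Y ⟨U, V, P, Q', f₀, f₁ ≫ (q ⊗ₘ 𝟙 U), f₂, g⟩
        ⟨U, V, P, Q, f₀, f₁, (q ⊗ₘ 𝟙 V) ≫ f₂, g⟩
  | hole {U V U' V' P₀ P Q : C} (a : U ⟶ P₀ ⊗ U') (b : P₀ ⊗ V' ⟶ V)
      (f₀ : A ⟶ P ⊗ X) (f₁ : P ⊗ Y ⟶ Q ⊗ U) (f₂ : Q ⊗ V ⟶ B) (g' : U' ⟶ V') :
      URel A B X Y
        ⟨U', V', P, Q ⊗ P₀, f₀,
          f₁ ≫ (𝟙 Q ⊗ₘ a) ≫ (α_ Q P₀ U').inv,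
          (α_ Q P₀ V').hom ≫ (𝟙 Q ⊗ₘ b) ≫ f₂, g'⟩
        ⟨U, V, P, Q, f₀, f₁, f₂, a ≫ (𝟙 P₀ ⊗ₘ g') ≫ b⟩

/-- Forward map on representatives. -/
def erep {A B X Y : C} (r : URep A B X Y) : LensRep A B X Y :=
  ⟨r.P, r.f₀, r.f₁ ≫ (𝟙 r.Q ⊗ₘ r.g) ≫ r.f₂⟩

lemma erep_sound {A B X Y : C} (r s : URep A B X Y) (h : URel A B X Y r s) :
    Quot.mk (LensRel A B X Y) (erep r) = Quot.mk _ (erep s) := by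
  cases h with
  | fst p f₀ f₁ f₂ g =>
      simp only [erep, Category.assoc]
      exact Quot.sound (LensRel.dinat p f₀ (f₁ ≫ (𝟙 _ ⊗ₘ g) ≫ f₂))
  | snd q f₀ f₁ f₂ g =>
      have : (f₁ ≫ (q ⊗ₘ 𝟙 _)) ≫ (𝟙 _ ⊗ₘ g) ≫ f₂ =
          f₁ ≫ (𝟙 _ ⊗ₘ g) ≫ (q ⊗ₘ 𝟙 _) ≫ f₂ := by
        simp [MonoidalCategory.tensorHom_def, whisker_exchange_assoc]
      simp only [erep, this]
  | hole a b f₀ f₁ f₂ g' =>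
      have : (f₁ ≫ (𝟙 _ ⊗ₘ a) ≫ (α_ _ _ _).inv) ≫ (𝟙 _ ⊗ₘ g') ≫
            (α_ _ _ _).hom ≫ (𝟙 _ ⊗ₘ b) ≫ f₂ =
          f₁ ≫ (𝟙 _ ⊗ₘ a ≫ (𝟙 _ ⊗ₘ g') ≫ b) ≫ f₂ := by
        simp [MonoidalCategory.tensorHom_def, whisker_exchange_assoc]
      simp only [erep, this]

/-- Backward map on representatives. -/
def irep {A B X Y : C} (l : LensRep A B X Y) : URep A B X Y :=
  ⟨𝟙_ C, 𝟙_ C, l.M, l.M ⊗ Y, l.f, (ρ_ (l.M ⊗ Y)).inv,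
    (ρ_ (l.M ⊗ Y)).hom ≫ l.g, 𝟙 (𝟙_ C)⟩

lemma irep_sound {A B X Y : C} (l l' : LensRep A B X Y)
    (h : LensRel A B X Y l l') :
    Quot.mk (URel A B X Y) (irep l) = Quot.mk _ (irep l') := by
  cases h with
  | dinat m f g' =>
      calc Quot.mk (URel A B X Y)
            ⟨𝟙_ C, 𝟙_ C, _, _, f ≫ (m ⊗ₘ 𝟙 X), (ρ_ _).inv,
              (ρ_ _).hom ≫ g', 𝟙 (𝟙_ C)⟩
          = Quot.mk _ ⟨𝟙_ C, 𝟙_ C, _, _, f, (m ⊗ₘ 𝟙 Y) ≫ (ρ_ _).inv,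
              (ρ_ _).hom ≫ g', 𝟙 (𝟙_ C)⟩ :=
            Quot.sound (URel.fst m f _ _ _)
        _ = Quot.mk _ ⟨𝟙_ C, 𝟙_ C, _, _, f,
              (ρ_ _).inv ≫ ((m ⊗ₘ 𝟙 Y) ⊗ₘ 𝟙 (𝟙_ C)),
              (ρ_ _).hom ≫ g', 𝟙 (𝟙_ C)⟩ := by
            have : (m ⊗ₘ 𝟙 Y) ≫ (ρ_ _).inv =
                (ρ_ _).inv ≫ ((m ⊗ₘ 𝟙 Y) ⊗ₘ 𝟙 (𝟙_ C)) := by simp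
            rw [this]
        _ = Quot.mk _ ⟨𝟙_ C, 𝟙_ C, _, _, f, (ρ_ _).inv,
              ((m ⊗ₘ 𝟙 Y) ⊗ₘ 𝟙 (𝟙_ C)) ≫ (ρ_ _).hom ≫ g', 𝟙 (𝟙_ C)⟩ :=
            Quot.sound (URel.snd (m ⊗ₘ 𝟙 Y) f _ _ _)
        _ = Quot.mk _ (irep ⟨_, f, (m ⊗ₘ 𝟙 Y) ≫ g'⟩) := by
            have : ((m ⊗ₘ 𝟙 Y) ⊗ₘ 𝟙 (𝟙_ C)) ≫ (ρ_ _).hom ≫ g' =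
                (ρ_ _).hom ≫ (m ⊗ₘ 𝟙 Y) ≫ g' := by simp
            rw [irep, this]

lemma left_inv {A B X Y : C} (r : URep A B X Y) :
    Quot.mk (URel A B X Y) (irep (erep r)) = Quot.mk _ r := by
  obtain ⟨U, V, P, Q, f₀, f₁, f₂, g⟩ := r
  calc Quot.mk (URel A B X Y)
        ⟨𝟙_ C, 𝟙_ C, P, P ⊗ Y, f₀, (ρ_ _).inv,
          (ρ_ _).hom ≫ f₁ ≫ (𝟙 Q ⊗ₘ g) ≫ f₂, 𝟙 (𝟙_ C)⟩
      = Quot.mk _ ⟨𝟙_ C, 𝟙_ C, P, P ⊗ Y, f₀, (ρ_ _).inv,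
          (f₁ ⊗ₘ 𝟙 (𝟙_ C)) ≫ (ρ_ (Q ⊗ U)).hom ≫ (𝟙 Q ⊗ₘ g) ≫ f₂,
          𝟙 (𝟙_ C)⟩ := by
        have : (ρ_ (P ⊗ Y)).hom ≫ f₁ ≫ (𝟙 Q ⊗ₘ g) ≫ f₂ =
            (f₁ ⊗ₘ 𝟙 (𝟙_ C)) ≫ (ρ_ (Q ⊗ U)).hom ≫ (𝟙 Q ⊗ₘ g) ≫ f₂ := by
          simp
        rw [this]
    _ = Quot.mk _ ⟨𝟙_ C, 𝟙_ C, P, Q ⊗ U, f₀,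
          (ρ_ (P ⊗ Y)).inv ≫ (f₁ ⊗ₘ 𝟙 (𝟙_ C)),
          (ρ_ (Q ⊗ U)).hom ≫ (𝟙 Q ⊗ₘ g) ≫ f₂, 𝟙 (𝟙_ C)⟩ :=
        (Quot.sound (URel.snd f₁ f₀ (ρ_ (P ⊗ Y)).inv _ _)).symm
    _ = Quot.mk _ ⟨𝟙_ C, 𝟙_ C, P, Q ⊗ U, f₀,
          f₁ ≫ (𝟙 Q ⊗ₘ (ρ_ U).inv) ≫ (α_ Q U (𝟙_ C)).inv,
          (α_ Q U (𝟙_ C)).hom ≫ (𝟙 Q ⊗ₘ ((ρ_ U).hom ≫ g)) ≫ f₂,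
          𝟙 (𝟙_ C)⟩ := by
        have h1 : (ρ_ (P ⊗ Y)).inv ≫ (f₁ ⊗ₘ 𝟙 (𝟙_ C)) =
            f₁ ≫ (𝟙 Q ⊗ₘ (ρ_ U).inv) ≫ (α_ Q U (𝟙_ C)).inv := by
          simp [MonoidalCategory.tensorHom_def]
        have h2 : (ρ_ (Q ⊗ U)).hom ≫ (𝟙 Q ⊗ₘ g) ≫ f₂ =
            (α_ Q U (𝟙_ C)).hom ≫ (𝟙 Q ⊗ₘ ((ρ_ U).hom ≫ g)) ≫ f₂ := by
          simp [MonoidalCategory.tensorHom_def]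
        rw [h1, h2]
    _ = Quot.mk _ ⟨U, V, P, Q, f₀, f₁, f₂,
          (ρ_ U).inv ≫ (𝟙 U ⊗ₘ 𝟙 (𝟙_ C)) ≫ (ρ_ U).hom ≫ g⟩ :=
        Quot.sound (URel.hole (ρ_ U).inv ((ρ_ U).hom ≫ g) f₀ f₁ f₂ (𝟙 (𝟙_ C)))
    _ = Quot.mk _ ⟨U, V, P, Q, f₀, f₁, f₂, g⟩ := by
        have : (ρ_ U).inv ≫ (𝟙 U ⊗ₘ 𝟙 (𝟙_ C)) ≫ (ρ_ U).hom ≫ g = g := by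
          simp
        rw [this]

lemma right_inv {A B X Y : C} (l : LensRep A B X Y) :
    Quot.mk (LensRel A B X Y) (erep (irep l)) = Quot.mk _ l := by
  obtain ⟨M, f, g⟩ := l
  have : erep (irep (⟨M, f, g⟩ : LensRep A B X Y)) = ⟨M, f, g⟩ := by
    simp [erep, irep]
  rw [this]

/-- Filling the second hole of a sequential split of monoidal lenses by a unit
yields, up to dinaturality, exactly a monoidal lens. -/
theorem lenses_sequential_right_unitor (C : Type u) [Category.{v} C]
    [MonoidalCategory C] [SymmetricCategory C] (A B X Y : C) :
    ∃ e : Quot (URel A B X Y) → LC A B X Y,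
      (∀ r : URep A B X Y,
          e (Quot.mk _ r) =
            Quot.mk _ ⟨r.P, r.f₀, r.f₁ ≫ (𝟙 r.Q ⊗ₘ r.g) ≫ r.f₂⟩) ∧
      Function.Bijective e := by
  refine ⟨Quot.lift (fun r => Quot.mk _ (erep r)) erep_sound, fun r => rfl, ?_⟩
  have key : Function.LeftInverse
        (Quot.lift (fun l => Quot.mk _ (irep l)) irep_sound :
          LC A B X Y → Quot (URel A B X Y))
        (Quot.lift (fun r => Quot.mk _ (erep r)) erep_sound) := by
    intro x
    induction x using Quot.ind with
    | _ r => exact left_inv r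
  have key2 : Function.RightInverse
        (Quot.lift (fun l => Quot.mk _ (irep l)) irep_sound :
          LC A B X Y → Quot (URel A B X Y))
        (Quot.lift (fun r => Quot.mk _ (erep r)) erep_sound) := by
    intro x
    induction x using Quot.ind with
    | _ l => exact right_inv l
  exact ⟨key.injective, key2.surjective⟩
end
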